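/- Let n and m be positive integers with m ≤ n, and let a_1 < a_2 < ... < a_m be distinct positive integers. Then the power sum polynomials p_{a_1}, p_{a_2}, ..., p_{a_m}, where p_a = x_1^a + x_2^a + ... + x_n^a in the polynomial ring ℂ[x_1, ..., x_n], are algebraically independent over ℂ. -/

import Mathlib

/-!
Jacobian criterion. If the Jacobian matrix `(∂ p_j / ∂ x_{e k})` has nonzero determinant, take a
relation `Q(p) = 0` of minimal degree: by the chain rule the vector `((∂_j Q)(p))_j` lies in the
kernel of the Jacobian, hence vanishes, so by minimality every `∂_j Q` is zero and, in
characteristic zero, `Q` is a constant, i.e. zero.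

For the power sums the Jacobian with respect to `x_1, …, x_m` is `(a_j x_k^{a_j - 1})`, a nonzero
multiple of a generalized Vandermonde determinant. Since the exponents `a_j - 1` are distinct, each
permutation contributes a different monomial, so the diagonal monomial has coefficient `1`.
-/

open MvPolynomial

namespace MvPolynomial

variable {R σ ι : Type*}

section CommSemiring

variable [CommSemiring R]

theorem pderiv_aeval [Fintype ι] (p : ι → MvPolynomial σ R) (i : σ) (Q : MvPolynomial ι R) :
    pderiv i (aeval p Q) = ∑ j, aeval p (pderiv j Q) * pderiv i (p j) := by
  classical
  induction Q using MvPolynomial.induction_on with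
  | C c => simp
  | add f g hf hg => simp only [map_add, hf, hg, add_mul, Finset.sum_add_distrib]
  | mul_X f j hf =>
    simp only [map_mul, aeval_X, Derivation.leibniz, hf, pderiv_X, smul_eq_mul, map_add,
      add_mul, Finset.sum_add_distrib, Finset.mul_sum, Pi.single_apply, mul_ite, mul_one,
      mul_zero, apply_ite (aeval p), map_zero, ite_mul, zero_mul, Finset.sum_ite_eq,
      Finset.mem_univ, if_true, mul_assoc]

theorem pderiv_psum [Fintype σ] (i : σ) (a : ℕ) :
    pderiv i (psum σ R a) = (a : MvPolynomial σ R) * X i ^ (a - 1) := by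
  classical
  simp [psum, pderiv_X, Pi.single_apply]

theorem totalDegree_pderiv_lt {i : σ} {Q : MvPolynomial σ R} (h : pderiv i Q ≠ 0) :
    (pderiv i Q).totalDegree < Q.totalDegree := by
  obtain ⟨d, hd, hdeg⟩ :=
    Finset.exists_mem_eq_sup _ (support_nonempty.2 h) fun s => s.sum fun _ e => e
  have hQ : d + Finsupp.single i 1 ∈ Q.support := by
    rw [mem_support_iff] at hd ⊢
    exact fun h0 => hd (by rw [coeff_pderiv, h0, zero_mul])
  calc (pderiv i Q).totalDegree = d.sum fun _ e => e := hdeg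
    _ < (d + Finsupp.single i 1).sum fun _ e => e := by simp [Finsupp.sum_add_index']
    _ ≤ Q.totalDegree := le_totalDegree hQ

end CommSemiring

theorem eq_C_of_forall_pderiv_eq_zero [CommRing R] [IsAddTorsionFree R] {Q : MvPolynomial σ R}
    (h : ∀ i, pderiv i Q = 0) : Q = C (coeff 0 Q) := by
  rw [← coe_inj]
  refine MvPowerSeries.pderiv.ext (fun i => ?_) ?_
  · rw [MvPowerSeries.pderiv_coe, MvPowerSeries.pderiv_coe, h, pderiv_C]
  · simp only [← MvPowerSeries.coeff_zero_eq_constantCoeff_apply, coeff_coe, coeff_zero_C]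

theorem det_X_pow_ne_zero [CommRing R] [Nontrivial R] [Fintype ι] [DecidableEq ι] {e : ι → σ}
    (he : Function.Injective e) {b : ι → ℕ} (hb : Function.Injective b) :
    (Matrix.of fun k j => (X (e k) ^ b j : MvPolynomial σ R)).det ≠ 0 := by
  classical
  let exponent (τ : Equiv.Perm ι) : σ →₀ ℕ := ∑ j, Finsupp.single (e (τ j)) (b j)
  have exponent_apply (τ : Equiv.Perm ι) (k : ι) : exponent τ (e (τ k)) = b k := by
    simp [exponent, Finsupp.finsetSum_apply, Finsupp.single_apply, he.eq_iff]
  have exponent_inj (τ : Equiv.Perm ι) (hτ : exponent τ = exponent 1) : τ = 1 := by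
    ext k
    have h := exponent_apply 1 (τ k)
    rw [Equiv.Perm.one_apply, ← hτ, exponent_apply] at h
    exact (hb h).symm
  have hcoeff : coeff (exponent 1) (Matrix.of fun k j => (X (e k) ^ b j : MvPolynomial σ R)).det
      = 1 := by
    have hprod (τ : Equiv.Perm ι) :
        ∏ j, (X (e (τ j)) ^ b j : MvPolynomial σ R) = monomial (exponent τ) 1 := by
      simp [exponent, X_pow_eq_monomial, monomial_sum_index]
    rw [Matrix.det_apply, coeff_sum, Finset.sum_eq_single 1]
    · simpa [coeff_monomial] using congrArg (coeff (exponent 1)) (hprod 1)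
    · intro τ _ hτ
      simp only [Matrix.of_apply, hprod, coeff_smul, coeff_monomial]
      rw [if_neg (fun h => hτ (exponent_inj τ h)), smul_zero]
    · simp
  intro h0
  simp [h0] at hcoeff

theorem algebraicIndependent_of_det_pderiv_ne_zero [CommRing R] [IsDomain R] [CharZero R]
    [Fintype ι] [DecidableEq ι] {p : ι → MvPolynomial σ R} (e : ι → σ)
    (h : (Matrix.of fun k j => pderiv (e k) (p j)).det ≠ 0) : AlgebraicIndependent R p := by
  rw [algebraicIndependent_iff]
  intro Q
  induction hN : Q.totalDegree using Nat.strong_induction_on generalizing Q with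
  | _ N ih =>
  intro hQ
  have hJ : (Matrix.of fun k j => pderiv (e k) (p j)).mulVec (fun j => aeval p (pderiv j Q))
      = 0 := by
    ext k
    simp only [Matrix.mulVec, dotProduct, Matrix.of_apply, mul_comm (pderiv _ _), ← pderiv_aeval,
      hQ, map_zero, Pi.zero_apply]
  have hv := congrFun (Matrix.eq_zero_of_mulVec_eq_zero h hJ)
  have hd (j : ι) : pderiv j Q = 0 := by
    by_contra hj
    exact hj (ih _ (hN ▸ totalDegree_pderiv_lt hj) _ rfl (hv j))
  have hC := eq_C_of_forall_pderiv_eq_zero hd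
  rw [hC] at hQ ⊢
  simpa using hQ

theorem algebraicIndependent_psum [CommRing R] [IsDomain R] [CharZero R] [Fintype σ] [Fintype ι]
    {a : ι → ℕ} (ha : Function.Injective a) (ha0 : ∀ j, a j ≠ 0)
    (hcard : Fintype.card ι ≤ Fintype.card σ) :
    AlgebraicIndependent R fun j => psum σ R (a j) := by
  classical
  obtain ⟨e⟩ := Function.Embedding.nonempty_of_card_le hcard
  have hb : Function.Injective fun j => a j - 1 := fun j k hjk => by
    have := ha0 j
    have := ha0 k
    exact ha (by dsimp only at hjk; omega)
  refine algebraicIndependent_of_det_pderiv_ne_zero e ?_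
  have h := Matrix.det_mul_row (fun j => (a j : MvPolynomial σ R))
    (Matrix.of fun k j => X (e k) ^ (a j - 1))
  simp only [Matrix.of_apply] at h
  simp only [pderiv_psum, h]
  exact mul_ne_zero (Finset.prod_ne_zero_iff.2 fun j _ => Nat.cast_ne_zero.2 (ha0 j))
    (det_X_pow_ne_zero e.injective hb)

end MvPolynomial

theorem powerSums_algebraicIndependent_general
    (n m : ℕ) (hmn : m ≤ n)
    (a : Fin m → ℕ) (ha : StrictMono a) (hapos : ∀ j, 0 < a j) :
    AlgebraicIndependent ℂ
      (fun j : Fin m => ∑ i : Fin n, (X i : MvPolynomial (Fin n) ℂ) ^ a j) :=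
  algebraicIndependent_psum ha.injective (fun j => (hapos j).ne') (by simpa using hmn)

/-- For `m ≤ n` and distinct positive exponents `a_1 < … < a_m`, the power sum
polynomials `p_{a_j} = ∑_{i=1}^n x_i^{a_j}` in `ℂ[x_1,…,x_n]` are algebraically
independent over `ℂ`. -/
theorem powerSums_algebraicIndependent
    (n m : ℕ) (hn : 0 < n) (hm : 0 < m) (hmn : m ≤ n)
    (a : Fin m → ℕ) (ha : StrictMono a) (hapos : ∀ j, 0 < a j) :
    AlgebraicIndependent ℂ
      (fun j : Fin m => ∑ i : Fin n, (X i : MvPolynomial (Fin n) ℂ) ^ a j) :=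
  powerSums_algebraicIndependent_general n m hmn a ha hapos
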